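/- Let F be a field, R = F⟨x,y,z⟩ the free associative F-algebra, and for i, n ≥ 1 let I_{i,n} be the two-sided ideal generated by {x·zʲ·x : 0 ≤ j ≤ i−1} ∪ {x·zⁱ·x·w·x·zⁱ·x : w a monomial with deg_y(w) < n}. Then for every fixed i ≥ 1, the union ⋃ₙ I_{i,n} equals the two-sided ideal generated by {x·zʲ·x : 0 ≤ j ≤ i−1} plus (R·x·zⁱ·x·R)², and this union is not semiprime: it contains (R·x·zⁱ·x·R)² but does not contain x·zⁱ·x. -/

import Mathlib

set_option linter.unnecessarySimpa false
set_option linter.unusedVariables false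


/-- The product of two two-sided ideals: the two-sided ideal generated by
products `a * b` with `a ∈ I`, `b ∈ J`. -/
def mulTSI {R : Type*} [Ring R] (I J : TwoSidedIdeal R) : TwoSidedIdeal R :=
  TwoSidedIdeal.span {z | ∃ a ∈ I, ∃ b ∈ J, z = a * b}

/-- The generators `x`, `y`, `z` of the free algebra `F⟨x,y,z⟩`. -/
noncomputable def X3 (F : Type*) [Field F] : FreeAlgebra F (Fin 3) := FreeAlgebra.ι F 0
noncomputable def Y3 (F : Type*) [Field F] : FreeAlgebra F (Fin 3) := FreeAlgebra.ι F 1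
noncomputable def Z3 (F : Type*) [Field F] : FreeAlgebra F (Fin 3) := FreeAlgebra.ι F 2

/-- The ideal `I_{i,n}` of `F⟨x,y,z⟩`, generated by the monomials `x zʲ x` for `j < i`
together with the monomials `x zⁱ x w x zⁱ x` where `w` is a monomial with `deg_y w < n`. -/
noncomputable def Iin (F : Type*) [Field F] (i n : ℕ) :
    TwoSidedIdeal (FreeAlgebra F (Fin 3)) :=
  TwoSidedIdeal.span
    ({m | ∃ j < i, m = X3 F * (Z3 F) ^ j * X3 F} ∪
     {m | ∃ l : List (Fin 3), l.count 1 < n ∧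
        m = X3 F * (Z3 F) ^ i * X3 F * (l.map (FreeAlgebra.ι F)).prod *
            X3 F * (Z3 F) ^ i * X3 F})

/-- The union `⋃_{n ≥ 1} I_{i,n}` (as a set). -/
noncomputable def UIin (F : Type*) [Field F] (i : ℕ) : Set (FreeAlgebra F (Fin 3)) :=
  ⋃ n : ℕ, ⋃ (_ : 1 ≤ n), (Iin F i n : Set (FreeAlgebra F (Fin 3)))

noncomputable def Xop (F : Type*) [Field F] (i : ℕ) :
    Module.End F (F × Polynomial F × F) where
  toFun v := (0, Polynomial.C v.1, v.2.1.coeff i)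
  map_add' a b := by simp [Prod.ext_iff]
  map_smul' c a := by simp [Prod.ext_iff, Polynomial.smul_eq_C_mul, smul_eq_mul, map_mul]

noncomputable def Zop (F : Type*) [Field F] :
    Module.End F (F × Polynomial F × F) where
  toFun v := (0, Polynomial.X * v.2.1, 0)
  map_add' a b := by simp [Prod.ext_iff, mul_add]
  map_smul' c a := by simp [Prod.ext_iff, mul_smul_comm]

lemma Xop_apply (F : Type*) [Field F] (i : ℕ) (v : F × Polynomial F × F) :
    Xop F i v = (0, Polynomial.C v.1, v.2.1.coeff i) := rfl

lemma Zop_pow_apply (F : Type*) [Field F] (j : ℕ) (v : F × Polynomial F × F)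
    (hv : v.1 = 0) :
    ((Zop F) ^ j) v = (0, Polynomial.X ^ j * v.2.1, if j = 0 then v.2.2 else 0) := by
  induction j with
  | zero => simp [← hv]
  | succ j ih =>
    rw [pow_succ', Module.End.mul_apply, ih]
    have h1 : ∀ w : F × Polynomial F × F, Zop F w = (0, Polynomial.X * w.2.1, 0) := fun _ => rfl
    rw [h1]
    simp only [Prod.ext_iff, pow_succ']
    refine ⟨trivial, by ring, by simp⟩

lemma XZX_apply (F : Type*) [Field F] (i j : ℕ) (v : F × Polynomial F × F) :
    (Xop F i * (Zop F) ^ j * Xop F i) v = (0, 0, if j = i then v.1 else 0) := by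
  rw [Module.End.mul_apply, Module.End.mul_apply, Xop_apply,
    Zop_pow_apply F j _ rfl, Xop_apply]
  have h2 : Polynomial.X ^ j * Polynomial.C v.1 = Polynomial.monomial j v.1 := by
    rw [← Polynomial.C_mul_X_pow_eq_monomial]; ring
  simp [Prod.ext_iff, h2, Polynomial.coeff_monomial]

lemma XZX_eq_zero (F : Type*) [Field F] {i j : ℕ} (h : j < i) :
    Xop F i * (Zop F) ^ j * Xop F i = 0 := by
  refine LinearMap.ext fun v => ?_
  rw [XZX_apply]
  simp [h.ne]

noncomputable def phi (F : Type*) [Field F] (i : ℕ) :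
    FreeAlgebra F (Fin 3) →ₐ[F] Module.End F (F × Polynomial F × F) :=
  FreeAlgebra.lift F ![Xop F i, 0, Zop F]

lemma phi_X3 (F : Type*) [Field F] (i : ℕ) : phi F i (X3 F) = Xop F i := by
  simp [phi, X3, FreeAlgebra.lift_ι_apply]

lemma phi_Y3 (F : Type*) [Field F] (i : ℕ) : phi F i (Y3 F) = 0 := by
  simp [phi, Y3, FreeAlgebra.lift_ι_apply]

lemma phi_Z3 (F : Type*) [Field F] (i : ℕ) : phi F i (Z3 F) = Zop F := by
  simp [phi, Z3, FreeAlgebra.lift_ι_apply]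

/-- invariance property -/
def Pinv (F : Type*) [Field F] (A : Module.End F (F × Polynomial F × F)) : Prop :=
  ∀ v : F × Polynomial F × F, v.1 = 0 → (A v).1 = 0

lemma Pinv_gen (F : Type*) [Field F] (i : ℕ) (k : Fin 3) :
    Pinv F (phi F i (FreeAlgebra.ι F k)) := by
  rw [phi, FreeAlgebra.lift_ι_apply]
  fin_cases k
  · intro v hv; rfl
  · intro v hv; rfl
  · intro v hv; rfl

lemma Pinv_prod (F : Type*) [Field F] (i : ℕ) (l : List (Fin 3)) :
    Pinv F (phi F i ((l.map (FreeAlgebra.ι F)).prod)) := by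
  induction l with
  | nil => simpa [Pinv] using fun v h => h
  | cons k t ih =>
    rw [List.map_cons, List.prod_cons, map_mul]
    intro v hv
    rw [Module.End.mul_apply]
    exact Pinv_gen F i k _ (ih v hv)

lemma phi_u (F : Type*) [Field F] (i : ℕ) :
    phi F i (X3 F * (Z3 F) ^ i * X3 F) = Xop F i * (Zop F) ^ i * Xop F i := by
  rw [map_mul, map_mul, map_pow, phi_X3, phi_Z3]

lemma phi_u_ne (F : Type*) [Field F] (i : ℕ) :
    phi F i (X3 F * (Z3 F) ^ i * X3 F) ≠ 0 := by
  rw [phi_u]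
  intro h
  have h2 := LinearMap.congr_fun h ((1, 0, 0) : F × Polynomial F × F)
  rw [XZX_apply] at h2
  simpa using h2

lemma phi_uwu (F : Type*) [Field F] (i : ℕ) (l : List (Fin 3)) :
    phi F i (X3 F * (Z3 F) ^ i * X3 F * (l.map (FreeAlgebra.ι F)).prod *
      X3 F * (Z3 F) ^ i * X3 F) = 0 := by
  have hu := phi_u F i
  have key : ∀ v : F × Polynomial F × F,
      (Xop F i * (Zop F) ^ i * Xop F i) v = (0, 0, v.1) := by
    intro v; rw [XZX_apply]; simp
  rw [show X3 F * (Z3 F) ^ i * X3 F * (l.map (FreeAlgebra.ι F)).prod *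
      X3 F * (Z3 F) ^ i * X3 F
      = (X3 F * (Z3 F) ^ i * X3 F) * (l.map (FreeAlgebra.ι F)).prod *
        (X3 F * (Z3 F) ^ i * X3 F) by noncomm_ring]
  rw [map_mul, map_mul, hu]
  refine LinearMap.ext fun v => ?_
  rw [Module.End.mul_apply, Module.End.mul_apply, key]
  have h1 : (phi F i ((l.map (FreeAlgebra.ι F)).prod) ((0, 0, v.1) : F × Polynomial F × F)).1 = 0 :=
    Pinv_prod F i l _ rfl
  rw [key]
  simp [h1, Prod.ext_iff]

lemma span_le' {R : Type*} [Ring R] {s : Set R} {I : TwoSidedIdeal R} (h : s ⊆ I) :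
    TwoSidedIdeal.span s ≤ I := fun x hx => TwoSidedIdeal.mem_span_iff.mp hx I h

lemma Iin_mono (F : Type*) [Field F] (i : ℕ) {n m : ℕ} (h : n ≤ m) :
    Iin F i n ≤ Iin F i m := by
  apply TwoSidedIdeal.span_mono
  apply Set.union_subset_union_right
  rintro x ⟨l, hl, rfl⟩
  exact ⟨l, lt_of_lt_of_le hl h, rfl⟩

lemma Iin_le_ker (F : Type*) [Field F] (i n : ℕ) :
    Iin F i n ≤ TwoSidedIdeal.ker (phi F i).toRingHom := by
  apply span_le'
  rintro x (⟨j, hj, rfl⟩ | ⟨l, hl, rfl⟩)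
  · rw [SetLike.mem_coe, TwoSidedIdeal.mem_ker]
    show phi F i _ = 0
    rw [map_mul, map_mul, map_pow, phi_X3, phi_Z3]
    exact XZX_eq_zero F hj
  · rw [SetLike.mem_coe, TwoSidedIdeal.mem_ker]
    exact phi_uwu F i l

lemma u_not_mem_Iin (F : Type*) [Field F] (i n : ℕ) :
    X3 F * (Z3 F) ^ i * X3 F ∉ Iin F i n := fun h =>
  phi_u_ne F i (TwoSidedIdeal.mem_ker _ |>.mp (Iin_le_ker F i n h))

/-- every element is an `F`-linear combination of monomials -/
lemma mem_span_monomials (F : Type*) [Field F] (r : FreeAlgebra F (Fin 3)) :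
    r ∈ Submodule.span F {m : FreeAlgebra F (Fin 3) |
      ∃ l : List (Fin 3), m = (l.map (FreeAlgebra.ι F)).prod} := by
  set Mon : Set (FreeAlgebra F (Fin 3)) :=
    {m | ∃ l : List (Fin 3), m = (l.map (FreeAlgebra.ι F)).prod} with hMon
  induction r using FreeAlgebra.induction with
  | grade0 c =>
    have h1 : (1 : FreeAlgebra F (Fin 3)) ∈ Mon := ⟨[], by simp⟩
    have := Submodule.smul_mem (Submodule.span F Mon) c (Submodule.subset_span h1)
    rwa [Algebra.algebraMap_eq_smul_one]
  | grade1 k => exact Submodule.subset_span ⟨[k], by simp⟩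
  | add a b ha hb => exact Submodule.add_mem _ ha hb
  | mul a b ha hb =>
    have h2 : a * b ∈ Submodule.span F Mon * Submodule.span F Mon :=
      Submodule.mul_mem_mul ha hb
    rw [Submodule.span_mul_span] at h2
    refine Submodule.span_le.mpr ?_ h2
    rintro x ⟨m1, hm1, m2, hm2, rfl⟩
    obtain ⟨l1, rfl⟩ := hm1
    obtain ⟨l2, rfl⟩ := hm2
    exact Submodule.subset_span ⟨l1 ++ l2, by simp⟩

lemma smul_mem' {R : Type*} [CommRing R] {A : Type*} [Ring A] [Algebra R A]
    (I : TwoSidedIdeal A) (c : R) {x : A} (hx : x ∈ I) : c • x ∈ I := by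
  rw [Algebra.smul_def]
  exact I.mul_mem_left _ _ hx

/-- the crux: `u * r * u` lands in some `Iin` -/
lemma crux (F : Type*) [Field F] (i : ℕ) (r : FreeAlgebra F (Fin 3)) :
    ∃ n, 1 ≤ n ∧
      (X3 F * (Z3 F) ^ i * X3 F) * r * (X3 F * (Z3 F) ^ i * X3 F) ∈ Iin F i n := by
  have hr := mem_span_monomials F r
  induction hr using Submodule.span_induction with
  | mem m hm =>
    obtain ⟨l, rfl⟩ := hm
    refine ⟨l.count 1 + 1, by omega, ?_⟩
    have : (X3 F * (Z3 F) ^ i * X3 F) * (l.map (FreeAlgebra.ι F)).prod *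
        (X3 F * (Z3 F) ^ i * X3 F)
        = X3 F * (Z3 F) ^ i * X3 F * (l.map (FreeAlgebra.ι F)).prod *
            X3 F * (Z3 F) ^ i * X3 F := by
      noncomm_ring
    rw [this]
    exact TwoSidedIdeal.subset_span (Or.inr ⟨l, by omega, rfl⟩)
  | zero => exact ⟨1, le_refl _, by simpa using (Iin F i 1).zero_mem⟩
  | add a b ha hb iha ihb =>
    obtain ⟨n1, hn1, h1⟩ := iha
    obtain ⟨n2, hn2, h2⟩ := ihb
    refine ⟨max n1 n2, le_trans hn1 (le_max_left _ _), ?_⟩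
    have e : (X3 F * (Z3 F) ^ i * X3 F) * (a + b) * (X3 F * (Z3 F) ^ i * X3 F)
        = (X3 F * (Z3 F) ^ i * X3 F) * a * (X3 F * (Z3 F) ^ i * X3 F)
          + (X3 F * (Z3 F) ^ i * X3 F) * b * (X3 F * (Z3 F) ^ i * X3 F) := by
      noncomm_ring
    rw [e]
    exact (Iin F i (max n1 n2)).add_mem
      (Iin_mono F i (le_max_left _ _) h1) (Iin_mono F i (le_max_right _ _) h2)
  | smul c x hx ihx =>
    obtain ⟨n, hn, h⟩ := ihx
    refine ⟨n, hn, ?_⟩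
    have e : (X3 F * (Z3 F) ^ i * X3 F) * (c • x) * (X3 F * (Z3 F) ^ i * X3 F)
        = c • ((X3 F * (Z3 F) ^ i * X3 F) * x * (X3 F * (Z3 F) ^ i * X3 F)) := by
      rw [mul_smul_comm, smul_mul_assoc]
    rw [e]
    exact smul_mem' _ c h

/-- the union ideal -/
noncomputable def Kun (F : Type*) [Field F] (i : ℕ) :
    TwoSidedIdeal (FreeAlgebra F (Fin 3)) :=
  TwoSidedIdeal.mk' {x | ∃ n, 1 ≤ n ∧ x ∈ Iin F i n}
    ⟨1, le_refl _, (Iin F i 1).zero_mem⟩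
    (fun {x y} ⟨n1, hn1, h1⟩ ⟨n2, hn2, h2⟩ =>
      ⟨max n1 n2, le_trans hn1 (le_max_left _ _),
        (Iin F i _).add_mem (Iin_mono F i (le_max_left _ _) h1)
          (Iin_mono F i (le_max_right _ _) h2)⟩)
    (fun {x} ⟨n, hn, h⟩ => ⟨n, hn, (Iin F i n).neg_mem h⟩)
    (fun {x y} ⟨n, hn, h⟩ => ⟨n, hn, (Iin F i n).mul_mem_left _ _ h⟩)
    (fun {x y} ⟨n, hn, h⟩ => ⟨n, hn, (Iin F i n).mul_mem_right _ _ h⟩)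

lemma mem_Kun (F : Type*) [Field F] (i : ℕ) (x : FreeAlgebra F (Fin 3)) :
    x ∈ Kun F i ↔ ∃ n, 1 ≤ n ∧ x ∈ Iin F i n := by
  rw [Kun, TwoSidedIdeal.mem_mk']
  rfl

lemma prod_mem_Kun (F : Type*) [Field F] (i : ℕ) {a b : FreeAlgebra F (Fin 3)}
    (ha : a ∈ TwoSidedIdeal.span {X3 F * (Z3 F) ^ i * X3 F})
    (hb : b ∈ TwoSidedIdeal.span {X3 F * (Z3 F) ^ i * X3 F}) :
    a * b ∈ Kun F i := by
  rw [TwoSidedIdeal.mem_span_iff_mem_addSubgroup_closure] at ha hb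
  induction ha using AddSubgroup.closure_induction with
  | mem a' ha' =>
    obtain ⟨p, hp, s, -, rfl⟩ := ha'
    obtain ⟨r, -, w, hw, rfl⟩ := hp
    rw [Set.mem_singleton_iff] at hw
    subst hw
    induction hb using AddSubgroup.closure_induction with
    | mem b' hb' =>
      obtain ⟨p', hp', s', -, rfl⟩ := hb'
      obtain ⟨r', -, w', hw', rfl⟩ := hp'
      rw [Set.mem_singleton_iff] at hw'
      subst hw'
      obtain ⟨n, hn, h⟩ := crux F i (s * r')
      have e : r * (X3 F * (Z3 F) ^ i * X3 F) * s * (r' * (X3 F * (Z3 F) ^ i * X3 F) * s')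
          = (r * ((X3 F * (Z3 F) ^ i * X3 F) * (s * r') * (X3 F * (Z3 F) ^ i * X3 F))) * s' := by
        noncomm_ring
      rw [e, mem_Kun]
      exact ⟨n, hn, (Iin F i n).mul_mem_right _ _ ((Iin F i n).mul_mem_left _ _ h)⟩
    | zero => rw [mul_zero]; exact (Kun F i).zero_mem
    | add x y hx hy ihx ihy => rw [mul_add]; exact (Kun F i).add_mem ihx ihy
    | neg x hx ihx => rw [mul_neg]; exact (Kun F i).neg_mem ihx
  | zero => rw [zero_mul]; exact (Kun F i).zero_mem
  | add x y hx hy ihx ihy => rw [add_mul]; exact (Kun F i).add_mem ihx ihy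
  | neg x hx ihx => rw [neg_mul]; exact (Kun F i).neg_mem ihx

lemma mem_UIin (F : Type*) [Field F] (i : ℕ) (x : FreeAlgebra F (Fin 3)) :
    x ∈ UIin F i ↔ ∃ n, 1 ≤ n ∧ x ∈ Iin F i n := by
  simp [UIin, Set.mem_iUnion, SetLike.mem_coe]


/-- For fixed `i ≥ 1`, the union `⋃ₙ I_{i,n}` equals the two-sided ideal generated by
`{x zʲ x : j < i}` plus `(R x zⁱ x R)²`; it contains `(R x zⁱ x R)²` but does not contain
`x zⁱ x` (so it is not semiprime). -/
theorem stmt_4 (F : Type*) [Field F] (i : ℕ) (hi : 1 ≤ i) :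
    UIin F i =
      ↑(TwoSidedIdeal.span {m | ∃ j < i, m = X3 F * (Z3 F) ^ j * X3 F} ⊔
        mulTSI (TwoSidedIdeal.span {X3 F * (Z3 F) ^ i * X3 F})
               (TwoSidedIdeal.span {X3 F * (Z3 F) ^ i * X3 F})) ∧
    ↑(mulTSI (TwoSidedIdeal.span {X3 F * (Z3 F) ^ i * X3 F})
             (TwoSidedIdeal.span {X3 F * (Z3 F) ^ i * X3 F})) ⊆ UIin F i ∧
    X3 F * (Z3 F) ^ i * X3 F ∉ UIin F i := by
  set A := TwoSidedIdeal.span {m | ∃ j < i, m = X3 F * (Z3 F) ^ j * X3 F} with hA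
  set B := mulTSI (TwoSidedIdeal.span {X3 F * (Z3 F) ^ i * X3 F})
      (TwoSidedIdeal.span {X3 F * (Z3 F) ^ i * X3 F}) with hB
  -- B ≤ Kun
  have hBK : B ≤ Kun F i := by
    apply span_le'
    rintro z ⟨a, ha, b, hb, rfl⟩
    exact prod_mem_Kun F i ha hb
  -- A ≤ Kun
  have hAK : A ≤ Kun F i := by
    apply span_le'
    rintro x ⟨j, hj, rfl⟩
    rw [SetLike.mem_coe, mem_Kun]
    exact ⟨1, le_refl _, TwoSidedIdeal.subset_span (Or.inl ⟨j, hj, rfl⟩)⟩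
  -- Iin n ≤ A ⊔ B
  have hIin : ∀ n, Iin F i n ≤ A ⊔ B := by
    intro n
    apply span_le'
    rintro x (⟨j, hj, rfl⟩ | ⟨l, hl, rfl⟩)
    · exact TwoSidedIdeal.mem_sup_left (TwoSidedIdeal.subset_span ⟨j, hj, rfl⟩)
    · refine TwoSidedIdeal.mem_sup_right (TwoSidedIdeal.subset_span ?_)
      refine ⟨X3 F * (Z3 F) ^ i * X3 F, TwoSidedIdeal.subset_span rfl,
        (l.map (FreeAlgebra.ι F)).prod * (X3 F * (Z3 F) ^ i * X3 F),
        (TwoSidedIdeal.span _).mul_mem_left _ _ (TwoSidedIdeal.subset_span rfl), ?_⟩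
      noncomm_ring
  refine ⟨?_, ?_, ?_⟩
  · ext x
    rw [mem_UIin, SetLike.mem_coe]
    constructor
    · rintro ⟨n, hn, h⟩
      exact hIin n h
    · intro hx
      have : x ∈ Kun F i := (sup_le hAK hBK) hx
      rwa [mem_Kun] at this
  · intro x hx
    rw [mem_UIin, ← mem_Kun]
    exact hBK hx
  · rw [mem_UIin]
    rintro ⟨n, hn, h⟩
    exact u_not_mem_Iin F i n h
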